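/- arXiv:1712.03308 — 2 statements merged into one kernel-verified Lean document; each statement's English description precedes it below -/
import Mathlib

section
/- If the principle ⋔(𝔰, 𝔰, 𝔭) holds, then 𝔰 = 𝔰(pr). -/
open Filter Set Cardinal

/-- The splitting number `𝔰`. -/
noncomputable def frakS : Cardinal :=
  sInf { κc : Cardinal | ∃ S : Set (Set ℕ), #S = κc ∧
    ∀ a : Set ℕ, a.Infinite → ∃ x ∈ S, (a ∩ x).Infinite ∧ (a \ x).Infinite }

/-- The pseudo-intersection number `𝔭`: the least size of a family of infinite subsets
of `ℕ` with the strong finite intersection property but no infinite pseudo-intersection. -/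
noncomputable def frakP : Cardinal :=
  sInf { κc : Cardinal | ∃ F : Set (Set ℕ), #F = κc ∧ (∀ a ∈ F, a.Infinite) ∧
    (∀ G : Finset (Set ℕ), ↑G ⊆ F → (⋂ a ∈ G, a).Infinite) ∧
    ¬ ∃ s : Set ℕ, s.Infinite ∧ ∀ a ∈ F, (s \ a).Finite }

/-- `P : ℕ → Set ℕ` is a partition of `ℕ` into pairwise disjoint pieces. -/
def PartitionOfNat (P : ℕ → Set ℕ) : Prop :=
  (∀ i j : ℕ, i ≠ j → Disjoint (P i) (P j)) ∧ (⋃ i, P i) = Set.univ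

/-- A partition splits `a` if every piece meets `a` in an infinite set. -/
def PartSplits (P : ℕ → Set ℕ) (a : Set ℕ) : Prop := ∀ i : ℕ, (P i ∩ a).Infinite

/-- `𝔰(pr)`: the least size of a splitting family of partitions of `ℕ`. -/
noncomputable def sPR : Cardinal :=
  sInf { κc : Cardinal | ∃ F : Set (ℕ → Set ℕ), #F = κc ∧ (∀ P ∈ F, PartitionOfNat P) ∧
    ∀ a : Set ℕ, a.Infinite → ∃ P ∈ F, PartSplits P a }

/-- The stick principle `⋔(κ, λ, θ)`: there is a family of `λ` many countably infinite
subsets of `κ` such that every subset of `κ` of size `θ` contains a member of the family. -/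
def StickPrinciple (κ lam θ : Cardinal) : Prop :=
  ∃ C : Set (Set κ.out), #C = lam ∧ (∀ A ∈ C, #A = Cardinal.aleph0) ∧
    ∀ X : Set κ.out, #X = θ → ∃ A ∈ C, A ⊆ X

/-!
Fix a splitting family `x_α` (`α < 𝔰`) and well-order its indices. For infinite `a`, build a tower
`(a_γ)_{γ < 𝔭}`, almost decreasing, with `a_0 = a`, `a_{γ+1} = a_γ ∩ x_{α_γ}` where `α_γ` is the
least index such that `x_{α_γ}` splits `a_γ`, and an infinite pseudo-intersection of the earlier
stages at limits (one exists because fewer than `𝔭` sets are involved). For `γ < δ` we have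
`a_δ ⊆* x_{α_γ}`, so `x_{α_γ}` does not split `a_δ`, while any `x_β` splitting `a_δ` splits `a_γ`.
Hence `γ ↦ α_γ` is strictly increasing, and its range has size `𝔭`. By `⋔(𝔰, 𝔰, 𝔭)` that range
contains a member `A` of the stick family. List `A` in increasing order as `α_{γ_0} < α_{γ_1} < ⋯`,
and send `n` to the first `i` with `n ∉ x_{α_{γ_i}}`. The resulting partition splits `a`: piece `i`
almost contains `a_{γ_i} \ x_{α_{γ_i}}`. The partition depends only on `A`, so `𝔰` partitions
suffice. Conversely, the first pieces of a splitting family of partitions form a splitting family.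
-/

def Splits (x a : Set ℕ) : Prop := (a ∩ x).Infinite ∧ (a \ x).Infinite

theorem Set.Finite.diff_trans {α : Type*} {a b c : Set α} (hab : (a \ b).Finite)
    (hbc : (b \ c).Finite) : (a \ c).Finite :=
  (hab.union hbc).subset fun x ⟨hxa, hxc⟩ => by
    by_cases hxb : x ∈ b
    exacts [Or.inr ⟨hxb, hxc⟩, Or.inl ⟨hxa, hxb⟩]

theorem Splits.of_finite_diff {x a b : Set ℕ} (h : Splits x b) (hba : (b \ a).Finite) :
    Splits x a := by
  refine ⟨(h.1.sdiff hba).mono ?_, (h.2.sdiff hba).mono ?_⟩ <;>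
    rintro n ⟨⟨hnb, hnx⟩, hna⟩ <;> exact ⟨by_contra fun hn => hna ⟨hnb, hn⟩, hnx⟩

theorem Set.Infinite.exists_splits {a : Set ℕ} (ha : a.Infinite) : ∃ x, Splits x a := by
  have hinj := (Nat.nth_strictMono ha).injective
  have heven : (range fun n => Nat.nth (· ∈ a) (2 * n)).Infinite :=
    infinite_range_of_injective fun m n h => by simpa using hinj h
  have hodd : (range fun n => Nat.nth (· ∈ a) (2 * n + 1)).Infinite :=
    infinite_range_of_injective fun m n h => by simpa using hinj h
  refine ⟨range fun n => Nat.nth (· ∈ a) (2 * n), heven.mono ?_, hodd.mono ?_⟩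
  · rintro _ ⟨n, rfl⟩
    exact ⟨Nat.nth_mem_of_infinite ha _, n, rfl⟩
  · rintro _ ⟨n, rfl⟩
    refine ⟨Nat.nth_mem_of_infinite ha _, ?_⟩
    rintro ⟨m, hm⟩
    have := hinj hm
    omega

theorem Set.Infinite.exists_strictMono_mem {ι : Type*} [LinearOrder ι] [WellFoundedLT ι]
    {A : Set ι} (hA : A.Infinite) : ∃ f : ℕ → ι, StrictMono f ∧ ∀ n, f n ∈ A := by
  have := hA.to_subtype
  obtain ⟨f, hf | hf⟩ := Infinite.exists_strictMono_or_strictAnti ↥A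
  · exact ⟨fun n => f n, fun _ _ h => hf h, fun n => (f n).2⟩
  · exact (not_strictAnti_of_wellFoundedLT f hf).elim

theorem infinite_biInter_of_almostDirected {F : Set (Set ℕ)} (hinf : ∀ a ∈ F, a.Infinite)
    (hdir : ∀ a ∈ F, ∀ b ∈ F, ∃ c ∈ F, (c \ a).Finite ∧ (c \ b).Finite)
    {G : Finset (Set ℕ)} (hG : ↑G ⊆ F) : (⋂ a ∈ G, a).Infinite := by
  rcases G.eq_empty_or_nonempty with rfl | ⟨b₀, hb₀⟩
  · simpa using infinite_univ
  have hlower : ∀ G' : Finset (Set ℕ), ↑G' ⊆ F → ∃ c ∈ F, ∀ b ∈ G', (c \ b).Finite := by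
    intro G'
    induction G' using Finset.induction_on with
    | empty => exact fun _ => ⟨b₀, hG hb₀, by simp⟩
    | insert b G' _ ih =>
      intro hbG'
      rw [Finset.coe_insert, insert_subset_iff] at hbG'
      obtain ⟨c, hc, hcG'⟩ := ih hbG'.2
      obtain ⟨d, hd, hdb, hdc⟩ := hdir b hbG'.1 c hc
      refine ⟨d, hd, Finset.forall_mem_insert _ _ _ |>.2 ⟨hdb, fun b' hb' => ?_⟩⟩
      exact hdc.diff_trans (hcG' b' hb')
  obtain ⟨c, hc, hcG⟩ := hlower G hG
  have hfin : (c \ ⋂ a ∈ G, a).Finite := by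
    simp only [sdiff_iInter]
    exact G.finite_toSet.biUnion fun b hb => hcG b hb
  have := (hinf c hc).sdiff hfin
  rw [sdiff_sdiff_right_self] at this
  exact this.mono inter_subset_right

theorem exists_infinite_pseudoIntersection_of_card_lt_frakP {F : Set (Set ℕ)} (hF : #F < frakP)
    (hinf : ∀ a ∈ F, a.Infinite)
    (hdir : ∀ a ∈ F, ∀ b ∈ F, ∃ c ∈ F, (c \ a).Finite ∧ (c \ b).Finite) :
    ∃ s : Set ℕ, s.Infinite ∧ ∀ a ∈ F, (s \ a).Finite := by
  by_contra hno
  refine (csInf_le' ?_).not_gt hF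
  exact ⟨F, rfl, hinf, fun G hG => infinite_biInter_of_almostDirected hinf hdir hG, hno⟩

theorem partitionOfNat_fibers (φ : ℕ → ℕ) : PartitionOfNat fun i => φ ⁻¹' {i} :=
  ⟨fun _ _ hij => (disjoint_singleton.2 hij).preimage φ, by ext; simp⟩

open Classical in
/-- Piece `0` of `exitPartition y` also receives the points lying in every `y m`. -/
noncomputable def exitIndex (y : ℕ → Set ℕ) (x : ℕ) : ℕ :=
  if h : ∃ m, x ∉ y m then Nat.find h else 0

def exitPartition (y : ℕ → Set ℕ) (i : ℕ) : Set ℕ := exitIndex y ⁻¹' {i}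

theorem exitIndex_eq {y : ℕ → Set ℕ} {x i : ℕ} (hxi : x ∉ y i) (hlt : ∀ m < i, x ∈ y m) :
    exitIndex y x = i := by
  classical
  rw [exitIndex, dif_pos ⟨i, hxi⟩, Nat.find_eq_iff]
  exact ⟨hxi, fun m hm => not_not.2 (hlt m hm)⟩

theorem partSplits_exitPartition {y : ℕ → Set ℕ} {a : Set ℕ}
    (h : ∀ i, ∃ b : Set ℕ, (b \ a).Finite ∧ (∀ m < i, (b \ y m).Finite) ∧ (b \ y i).Infinite) :
    PartSplits (exitPartition y) a := by
  intro i
  obtain ⟨b, hba, hby, hbyi⟩ := h i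
  have hfin : ((b \ a) ∪ ⋃ m < i, b \ y m).Finite :=
    hba.union <| (finite_lt_nat i).biUnion fun m hm => hby m hm
  refine (hbyi.sdiff hfin).mono ?_
  rintro x ⟨⟨hxb, hxyi⟩, hx⟩
  simp only [mem_union, Set.mem_sdiff, mem_iUnion, not_or, not_exists, not_and, not_not] at hx
  exact ⟨exitIndex_eq hxyi fun m hm => hx.2 m hm hxb, hx.1 hxb⟩

section SplittingTower

variable {ι : Type*} [LinearOrder ι] [WellFoundedLT ι] [Nonempty ι] (g : ι → Set ℕ)

def IsSplitting : Prop := ∀ b : Set ℕ, b.Infinite → ∃ α, Splits (g α) b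

open Classical in
noncomputable def leastSplitter (b : Set ℕ) : ι :=
  if h : ∃ α, Splits (g α) b then wellFounded_lt.min _ h else Classical.arbitrary ι

variable {g}

theorem leastSplitter_splits {b : Set ℕ} (h : ∃ α, Splits (g α) b) :
    Splits (g (leastSplitter g b)) b := by
  rw [leastSplitter, dif_pos h]
  exact wellFounded_lt.min_mem _ h

theorem not_splits_of_lt_leastSplitter {b : Set ℕ} {α : ι} (hα : α < leastSplitter g b) :
    ¬ Splits (g α) b := by
  intro hs
  rw [leastSplitter, dif_pos ⟨α, hs⟩] at hα
  exact wellFounded_lt.not_lt_min {β | Splits (g β) b} hs hα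

variable (g)

open Classical in
/-- The value `univ` is a placeholder: below `frakP.ord` the limit stages are pseudo-intersections
(`splittingTower_infinite_and_almostAnti`). -/
noncomputable def splittingTower (a : Set ℕ) (o : Ordinal.{0}) : Set ℕ :=
  Ordinal.limitRecOn o a (fun _ b => b ∩ g (leastSplitter g b)) fun δ _ T =>
    if h : ∃ s : Set ℕ, s.Infinite ∧ ∀ γ (hγ : γ < δ), (s \ T γ hγ).Finite then h.choose
    else univ

end SplittingTower

section SplittingTowerLemmas

variable {ι : Type*} [LinearOrder ι] [WellFoundedLT ι] [Nonempty ι] {g : ι → Set ℕ} {a : Set ℕ}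

theorem splittingTower_zero : splittingTower g a 0 = a := Ordinal.limitRecOn_zero ..

theorem splittingTower_add_one (o : Ordinal) :
    splittingTower g a (o + 1) =
      splittingTower g a o ∩ g (leastSplitter g (splittingTower g a o)) :=
  Ordinal.limitRecOn_add_one ..

open Classical in
theorem splittingTower_limit {o : Ordinal} (ho : Order.IsSuccLimit o) :
    splittingTower g a o =
      if h : ∃ s : Set ℕ, s.Infinite ∧ ∀ γ < o, (s \ splittingTower g a γ).Finite then h.choose
      else univ :=
  Ordinal.limitRecOn_limit _ _ _ _ ho

theorem splittingTower_infinite_and_almostAnti (hg : IsSplitting g) (ha : a.Infinite)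
    {δ : Ordinal} (hδ : δ < frakP.ord) :
    (splittingTower g a δ).Infinite ∧
      ∀ γ ≤ δ, (splittingTower g a δ \ splittingTower g a γ).Finite := by
  induction δ using Ordinal.limitRecOn with
  | zero => exact ⟨by rwa [splittingTower_zero], fun γ hγ => by simp [nonpos_iff_eq_zero.1 hγ]⟩
  | add_one δ ih =>
    obtain ⟨hinf, hanti⟩ := ih ((Order.lt_add_one_iff.2 le_rfl).trans hδ)
    refine ⟨?_, fun γ hγ => ?_⟩
    · rw [splittingTower_add_one]
      exact (leastSplitter_splits (hg _ hinf)).1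
    rcases hγ.lt_or_eq with hγ | rfl
    · rw [splittingTower_add_one]
      exact (hanti γ (Order.lt_add_one_iff.1 hγ)).subset (sdiff_subset_sdiff_left inter_subset_left)
    · simp
  | limit δ hlim ih =>
    set F := splittingTower g a '' Iio δ
    have hF : #F < frakP := by
      have h := mk_image_le_lift (f := splittingTower g a) (s := Iio δ)
      rw [mk_Iio_ordinal, lift_uzero, Cardinal.lift_le] at h
      exact h.trans_lt (lt_ord.1 hδ)
    have hinfF : ∀ b ∈ F, b.Infinite := by
      rintro _ ⟨γ, hγ, rfl⟩
      exact (ih γ hγ (hγ.trans hδ)).1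
    have hdirF : ∀ b ∈ F, ∀ c ∈ F, ∃ d ∈ F, (d \ b).Finite ∧ (d \ c).Finite := by
      rintro _ ⟨γ, hγ, rfl⟩ _ ⟨γ', hγ', rfl⟩
      have hmax : max γ γ' < δ := max_lt hγ hγ'
      have hanti := (ih _ hmax (hmax.trans hδ)).2
      exact ⟨_, mem_image_of_mem _ hmax, hanti _ (le_max_left _ _), hanti _ (le_max_right _ _)⟩
    obtain ⟨s, hs, hsF⟩ := exists_infinite_pseudoIntersection_of_card_lt_frakP hF hinfF hdirF
    have hex : ∃ s : Set ℕ, s.Infinite ∧ ∀ γ < δ, (s \ splittingTower g a γ).Finite :=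
      ⟨s, hs, fun γ hγ => hsF _ (mem_image_of_mem _ hγ)⟩
    refine ⟨?_, fun γ hγ => ?_⟩
    · rw [splittingTower_limit hlim, dif_pos hex]
      exact hex.choose_spec.1
    rcases hγ.lt_or_eq with hγ | rfl
    · rw [splittingTower_limit hlim, dif_pos hex]
      exact hex.choose_spec.2 γ hγ
    · simp

theorem splittingTower_diff_finite (hg : IsSplitting g) (ha : a.Infinite) {γ δ : Ordinal}
    (hγδ : γ ≤ δ) (hδ : δ < frakP.ord) :
    (splittingTower g a δ \ splittingTower g a γ).Finite :=
  (splittingTower_infinite_and_almostAnti hg ha hδ).2 γ hγδ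

theorem splits_leastSplitter_splittingTower (hg : IsSplitting g) (ha : a.Infinite) {δ : Ordinal}
    (hδ : δ < frakP.ord) :
    Splits (g (leastSplitter g (splittingTower g a δ))) (splittingTower g a δ) :=
  leastSplitter_splits (hg _ (splittingTower_infinite_and_almostAnti hg ha hδ).1)

theorem splittingTower_diff_leastSplitter_finite (hg : IsSplitting g) (ha : a.Infinite)
    {γ δ : Ordinal} (hγδ : γ < δ) (hδ : δ < frakP.ord) :
    (splittingTower g a δ \ g (leastSplitter g (splittingTower g a γ))).Finite := by
  have h := splittingTower_diff_finite hg ha (Order.add_one_le_iff.2 hγδ) hδ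
  rw [splittingTower_add_one] at h
  exact h.subset (sdiff_subset_sdiff_right inter_subset_right)

theorem strictMonoOn_leastSplitter_splittingTower (hg : IsSplitting g) (ha : a.Infinite) :
    StrictMonoOn (fun δ => leastSplitter g (splittingTower g a δ)) (Iio frakP.ord) := by
  intro γ _ δ hδ hγδ
  have hsplit := splits_leastSplitter_splittingTower hg ha hδ
  refine lt_of_le_of_ne (not_lt.1 fun hlt => ?_) fun heq => ?_
  · exact not_splits_of_lt_leastSplitter hlt
      (hsplit.of_finite_diff (splittingTower_diff_finite hg ha hγδ.le hδ))
  · simp only at heq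
    exact hsplit.2 (heq ▸ splittingTower_diff_leastSplitter_finite hg ha hγδ hδ)

theorem card_image_leastSplitter_splittingTower (hg : IsSplitting g) (ha : a.Infinite) :
    #((fun δ => leastSplitter g (splittingTower g a δ)) '' Iio frakP.ord) = lift frakP := by
  apply lift_injective.{1}
  simpa using mk_image_eq_of_injOn_lift _ _ (strictMonoOn_leastSplitter_splittingTower hg ha).injOn

theorem partSplits_exitPartition_of_mem_image (hg : IsSplitting g) (ha : a.Infinite)
    {f : ℕ → ι} (hf : StrictMono f)
    (hfX : ∀ n, f n ∈ (fun δ => leastSplitter g (splittingTower g a δ)) '' Iio frakP.ord) :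
    PartSplits (exitPartition (g ∘ f)) a := by
  choose γ hγ hfγ using hfX
  have hγ_mono : StrictMono γ := fun m n hmn =>
    ((strictMonoOn_leastSplitter_splittingTower hg ha).lt_iff_lt (hγ m) (hγ n)).1
      (by simpa only [hfγ] using hf hmn)
  refine partSplits_exitPartition fun i => ⟨splittingTower g a (γ i), ?_, fun m hm => ?_, ?_⟩
  · simpa only [splittingTower_zero] using
      splittingTower_diff_finite hg ha zero_le (hγ i)
  · rw [Function.comp_apply, ← hfγ m]
    exact splittingTower_diff_leastSplitter_finite hg ha (hγ_mono hm) (hγ i)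
  · rw [Function.comp_apply, ← hfγ i]
    exact (splits_leastSplitter_splittingTower hg ha (hγ i)).2

end SplittingTowerLemmas

theorem exists_splitting_family_card_eq_frakS :
    ∃ S : Set (Set ℕ), #S = frakS ∧ ∀ a : Set ℕ, a.Infinite → ∃ x ∈ S, Splits x a :=
  csInf_mem (s := {κc | ∃ S : Set (Set ℕ), #S = κc ∧ ∀ a : Set ℕ, a.Infinite → ∃ x ∈ S, Splits x a})
    ⟨_, univ, rfl, fun _ ha =>
      let ⟨x, hx⟩ := ha.exists_splits
      ⟨x, mem_univ x, hx⟩⟩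

theorem frakS_le_card_of_splitting_partitions {F : Set (ℕ → Set ℕ)}
    (hpart : ∀ P ∈ F, PartitionOfNat P)
    (hsplit : ∀ a : Set ℕ, a.Infinite → ∃ P ∈ F, PartSplits P a) : frakS ≤ #F := by
  refine le_trans (csInf_le' ?_) (mk_image_le (f := fun P => P 0))
  refine ⟨_, rfl, fun a ha => ?_⟩
  obtain ⟨P, hP, hPa⟩ := hsplit a ha
  refine ⟨P 0, mem_image_of_mem _ hP, inter_comm a _ ▸ hPa 0, (hPa 1).mono ?_⟩
  rintro x ⟨hx1, hxa⟩
  exact ⟨hxa, fun hx0 => disjoint_left.1 ((hpart P hP).1 0 1 zero_ne_one) hx0 hx1⟩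

theorem exists_splitting_partitions_of_stickPrinciple (h : StickPrinciple frakS frakS frakP) :
    ∃ F : Set (ℕ → Set ℕ), #F ≤ frakS ∧ (∀ P ∈ F, PartitionOfNat P) ∧
      ∀ a : Set ℕ, a.Infinite → ∃ P ∈ F, PartSplits P a := by
  obtain ⟨C, hC_card, hC_count, hC_stick⟩ := h
  obtain ⟨S, hS_card, hS_split⟩ := exists_splitting_family_card_eq_frakS
  obtain ⟨e⟩ : Nonempty (frakS.out ≃ S) := Cardinal.eq.1 (by rw [mk_out, hS_card])
  let : LinearOrder frakS.out := IsWellOrder.linearOrder WellOrderingRel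
  have : WellFoundedLT frakS.out := ⟨WellOrderingRel.isWellOrder.wf⟩
  set g : frakS.out → Set ℕ := fun α => e α
  have hg : IsSplitting g := fun b hb => by
    obtain ⟨x, hxS, hx⟩ := hS_split b hb
    exact ⟨e.symm ⟨x, hxS⟩, by simpa [g] using hx⟩
  have : Nonempty frakS.out := let ⟨α, _⟩ := hg univ infinite_univ; ⟨α⟩
  have hC_seq : ∀ A ∈ C, ∃ f : ℕ → frakS.out, StrictMono f ∧ ∀ n, f n ∈ A := fun A hA =>
    (infinite_coe_iff.1 (Cardinal.infinite_iff.2 (hC_count A hA).ge)).exists_strictMono_mem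
  choose f hf_mono hf_mem using hC_seq
  refine ⟨range fun A : C => exitPartition (g ∘ f A A.2), mk_range_le.trans hC_card.le,
    ?_, fun a ha => ?_⟩
  · rintro _ ⟨A, rfl⟩
    exact partitionOfNat_fibers _
  obtain ⟨A, hAC, hAX⟩ :=
    hC_stick _ (by rw [card_image_leastSplitter_splittingTower hg ha, lift_id])
  exact ⟨_, ⟨⟨A, hAC⟩, rfl⟩, partSplits_exitPartition_of_mem_image hg ha (hf_mono A hAC)
    fun n => hAX (hf_mem A hAC n)⟩

/-- If `⋔(𝔰, 𝔰, 𝔭)` holds, then `𝔰 = 𝔰(pr)`. -/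
theorem stmt9 (h : StickPrinciple frakS frakS frakP) : frakS = sPR := by
  obtain ⟨F, hF_card, hF_part, hF_split⟩ := exists_splitting_partitions_of_stickPrinciple h
  refine le_antisymm (le_csInf ?_ ?_) (le_trans (csInf_le' ?_) hF_card)
  · exact ⟨_, F, rfl, hF_part, hF_split⟩
  · rintro _ ⟨G, rfl, hG_part, hG_split⟩
    exact frakS_le_card_of_splitting_partitions hG_part hG_split
  · exact ⟨F, rfl, hF_part, hF_split⟩
end

section
/- Let κ < 𝔡 be a cardinal and let ⟨I_α : α < κ⟩ be a sequence of interval partitions. Then there exists an interval partition J such that for each α < κ there are infinitely many n for which some k > n satisfies I_{α,k} ⊆ J_n. -/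
/-!
Since fewer than `𝔡` functions cannot dominate, some `g` escapes each
`m ↦ I_α(I_α(m + 2) + 2)` infinitely often; make `g` monotone and above the identity and let
`J` iterate it from `0`, so that `J_{n+2} = g(J_{n+1})`. If `J_n ≤ m < J_{n+1}` and
`I_α(I_α(m + 2) + 2) < g(m)`, then either the interval `I_{α,m+1}` fits into `J_n`, or it
reaches past `J_{n+1}`, and then the interval of `I_α` with index `I_α(m + 2) + 1` lies beyond
`J_{n+1}` yet ends before `g(m) ≤ J_{n+2}`.
-/

open Filter Set Cardinal

/-- An interval partition is a strictly increasing `I : ℕ → ℕ` with `I 0 = 0`;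
the `n`-th interval is `[I n, I (n+1))`. -/
def IsIntervalPartition (I : ℕ → ℕ) : Prop := I 0 = 0 ∧ StrictMono I

/-- The dominating number `𝔡`. -/
noncomputable def frakD : Cardinal :=
  sInf { κc : Cardinal | ∃ D : Set (ℕ → ℕ), #D = κc ∧
    ∀ f : ℕ → ℕ, ∃ g ∈ D, ∀ᶠ n in atTop, f n ≤ g n }

def HasIntervalInside (I J : ℕ → ℕ) (n : ℕ) : Prop :=
  ∃ k > n, Ico (I k) (I (k + 1)) ⊆ Ico (J n) (J (n + 1))

theorem exists_frequently_lt_of_mk_lt_frakD {α : Type} (hκ : #α < frakD) (F : α → ℕ → ℕ) :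
    ∃ g : ℕ → ℕ, ∀ a, ∃ᶠ m in atTop, F a m < g m := by
  by_contra! h
  have hdom : ∀ f : ℕ → ℕ, ∃ g ∈ range F, ∀ᶠ n in atTop, f n ≤ g n := fun f =>
    let ⟨a, ha⟩ := h f
    ⟨F a, mem_range_self a, ha⟩
  have : frakD ≤ #(range F) := csInf_le' ⟨range F, rfl, hdom⟩
  exact (this.trans mk_range_le).not_gt hκ

theorem exists_monotone_majorant (g : ℕ → ℕ) :
    ∃ G : ℕ → ℕ, Monotone G ∧ (∀ m, m < G m) ∧ ∀ m, g m ≤ G m := by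
  refine ⟨fun m => m + 1 + (Finset.range (m + 1)).sup g, fun m m' hmm => ?_,
    fun m => by dsimp only; omega, fun m => ?_⟩
  · have := Finset.sup_mono (f := g) (Finset.range_subset_range.2 (by omega : m + 1 ≤ m' + 1))
    dsimp only
    omega
  · have := Finset.le_sup (f := g) (Finset.self_mem_range_succ m)
    dsimp only
    omega

theorem isIntervalPartition_iterate {G : ℕ → ℕ} (hG : ∀ m, m < G m) :
    IsIntervalPartition fun n => G^[n] 0 :=
  ⟨rfl, strictMono_nat_of_lt_succ fun n => by
    rw [Function.iterate_succ_apply']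
    exact hG _⟩

theorem IsIntervalPartition.exists_le_lt_succ {J : ℕ → ℕ} (hJ : IsIntervalPartition J) (m : ℕ) :
    ∃ n, J n ≤ m ∧ m < J (n + 1) := by
  set P : ℕ → Prop := fun k => J k ≤ m
  have hP0 : P 0 := by simp only [P, hJ.1, Nat.zero_le]
  refine ⟨Nat.findGreatest P m, Nat.findGreatest_spec (Nat.zero_le m) hP0, ?_⟩
  by_contra! hle
  have hgt : m < Nat.findGreatest P m + 1 := by
    by_contra! hm
    exact Nat.findGreatest_is_greatest (Nat.lt_succ_self _) hm hle
  have := hJ.2.le_apply (x := Nat.findGreatest P m + 1)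
  omega

theorem exists_hasIntervalInside_of_le {I J : ℕ → ℕ} (hI : StrictMono I) (hJ : StrictMono J)
    {m n : ℕ} (hnm : J n ≤ m) (hm : I (I (m + 2) + 2) ≤ J (n + 2)) :
    ∃ l ≥ n, HasIntervalInside I J l := by
  have hJn := hJ.le_apply (x := n)
  by_cases hp : I (m + 2) ≤ J (n + 1)
  · have := hI.le_apply (x := m + 1)
    exact ⟨n, le_rfl, m + 1, by omega, Ico_subset_Ico (by omega) hp⟩
  · have := hI.le_apply (x := I (m + 2) + 1)
    have := hJ.le_apply (x := n + 1)
    exact ⟨n + 1, by omega, I (m + 2) + 1, by omega, Ico_subset_Ico (by omega) hm⟩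

/-- Lemma: given fewer than `𝔡` many interval partitions `⟨I_α : α < κ⟩`, there is a
single interval partition `J` such that for each `α` there are infinitely many `n` with
some `k > n` satisfying `I_{α,k} ⊆ J_n`. -/
theorem stmt16 {α : Type} (hκ : #α < frakD) (I : α → ℕ → ℕ)
    (hI : ∀ a : α, IsIntervalPartition (I a)) :
    ∃ J : ℕ → ℕ, IsIntervalPartition J ∧ ∀ a : α,
      {n : ℕ | ∃ k > n,
        Set.Ico (I a k) (I a (k + 1)) ⊆ Set.Ico (J n) (J (n + 1))}.Infinite := by
  obtain ⟨g, hg⟩ := exists_frequently_lt_of_mk_lt_frakD hκ fun a m => I a (I a (m + 2) + 2)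
  obtain ⟨G, hGmono, hGlt, hgG⟩ := exists_monotone_majorant g
  set J : ℕ → ℕ := fun n => G^[n] 0
  have hJ : IsIntervalPartition J := isIntervalPartition_iterate hGlt
  refine ⟨J, hJ, fun a => Nat.frequently_atTop_iff_infinite.1 (frequently_atTop.2 fun N => ?_)⟩
  obtain ⟨m, hgm, hNm⟩ := ((hg a).and_eventually (eventually_ge_atTop (J N))).exists
  obtain ⟨n, hnm, hmn⟩ := hJ.exists_le_lt_succ m
  have hbound : I a (I a (m + 2) + 2) ≤ J (n + 2) := calc
    _ ≤ g m := hgm.le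
    _ ≤ G (J (n + 1)) := (hgG m).trans (hGmono hmn.le)
    _ = J (n + 2) := (Function.iterate_succ_apply' G (n + 1) 0).symm
  obtain ⟨l, hnl, hl⟩ := exists_hasIntervalInside_of_le (hI a).2 hJ.2 hnm hbound
  have hNn : N ≤ n := Nat.lt_succ_iff.1 (hJ.2.lt_iff_lt.1 (hNm.trans_lt hmn))
  exact ⟨l, hNn.trans hnl, hl⟩
end
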